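/- The second-order discrete Rellich inequality fails without the condition u_1 = 0: for every ε > 0 there exists a finitely supported real sequence u with u_0 = 0 (but u_1 ≠ 0) such that ∑_{n≥1} (Δu_n)² < ε ∑_{n≥2} u_n²/n⁴. -/

import Mathlib

/-!
Take `u n = n (L - n)² / L²` for `n ≤ L` and `u n = 0` beyond. On `[0, L]` this is a cubic, whose
second differences are exactly `(4L - 6n - 6) / L² = O(1 / L)`; since the cubic has a double root
at `L`, cutting it off there only produces the second difference `-u (L - 1) = -(L - 1) / L²`.
Hence `∑ (Δu)² ≤ L · 16 / L² = 16 / L`, while the single term `u₂² / 2⁴` of the weighted sum stays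
at least `1 / 64` once `L ≥ 4`. Letting `L → ∞` makes the Rellich quotient arbitrarily small,
although `u₁ = (L - 1)² / L² ≠ 0`.
-/

open Finset

theorem tsum_le_mul_of_eq_zero_of_le {f : ℕ → ℝ} {N : ℕ} {c : ℝ}
    (hzero : ∀ n ≥ N, f n = 0) (hle : ∀ n, f n ≤ c) : ∑' n, f n ≤ N * c := by
  rw [tsum_eq_sum (s := range N) fun n hn => hzero n (by simpa using hn)]
  simpa using sum_le_card_nsmul (range N) f c fun n _ => hle n

noncomputable def cubicProfile (L : ℕ) (n : ℕ) : ℝ :=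
  if n ≤ L then n * (L - n) ^ 2 / L ^ 2 else 0

namespace cubicProfile

variable {L n : ℕ}

theorem apply_of_le (h : n ≤ L) : cubicProfile L n = n * (L - n) ^ 2 / L ^ 2 :=
  if_pos h

theorem apply_eq_zero (h : L ≤ n) : cubicProfile L n = 0 := by
  rcases h.eq_or_lt with rfl | h
  · simp [cubicProfile]
  · exact if_neg h.not_ge

theorem apply_one_ne_zero (hL : 2 ≤ L) : cubicProfile L 1 ≠ 0 := by
  have hL' : (2 : ℝ) ≤ L := by exact_mod_cast hL
  have : (L : ℝ) - 1 ≠ 0 := by linarith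
  rw [apply_of_le (by omega)]
  push_cast
  positivity

theorem secondDiff_eq_zero (h : L ≤ n) :
    2 * cubicProfile L (n + 1) - cubicProfile L (n + 2) - cubicProfile L n = 0 := by
  simp [apply_eq_zero, h, le_add_right h]

theorem secondDiff_of_add_two_le (h : n + 2 ≤ L) :
    2 * cubicProfile L (n + 1) - cubicProfile L (n + 2) - cubicProfile L n =
      (4 * L - 6 * n - 6) / L ^ 2 := by
  have hL : (L : ℝ) ≠ 0 := by norm_cast; omega
  rw [apply_of_le (by omega), apply_of_le h, apply_of_le (by omega)]
  field_simp
  push_cast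
  ring

theorem secondDiff_sq_le (hL : 0 < L) (n : ℕ) :
    (2 * cubicProfile L (n + 1) - cubicProfile L (n + 2) - cubicProfile L n) ^ 2 ≤
      16 / L ^ 2 := by
  have hL' : (0 : ℝ) < L := by exact_mod_cast hL
  rcases le_or_gt (n + 2) L with h | h
  · have hnL : (n : ℝ) + 2 ≤ L := by exact_mod_cast h
    have hsq : (4 * (L : ℝ) - 6 * n - 6) ^ 2 ≤ (4 * L) ^ 2 :=
      sq_le_sq' (by linarith) (by linarith)
    rw [secondDiff_of_add_two_le h, div_pow, div_le_div_iff₀ (by positivity) (by positivity)]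
    nlinarith
  rcases le_or_gt L n with h' | h'
  · rw [secondDiff_eq_zero h', zero_pow two_ne_zero]
    positivity
  -- the cut-off at the double root `L`: here `n + 1 = L`
  have hn : (n : ℝ) + 1 = L := by exact_mod_cast (by omega : n + 1 = L)
  rw [apply_eq_zero (by omega : L ≤ n + 1), apply_eq_zero (by omega : L ≤ n + 2),
    apply_of_le h'.le]
  have hsq : (L - (n : ℝ)) ^ 2 = 1 := by rw [← hn]; ring
  rw [hsq, show 2 * 0 - 0 - (n : ℝ) * 1 / L ^ 2 = -(n / L ^ 2) by ring, neg_sq, div_pow,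
    div_le_div_iff₀ (by positivity) (by positivity)]
  have hn16 : (n : ℝ) ^ 2 ≤ 16 * L ^ 2 := by nlinarith [(n.cast_nonneg : (0 : ℝ) ≤ n)]
  nlinarith [mul_le_mul_of_nonneg_right hn16 (sq_nonneg (L : ℝ))]

theorem tsum_secondDiff_sq_le (hL : 0 < L) :
    ∑' n, (2 * cubicProfile L (n + 1) - cubicProfile L (n + 2) - cubicProfile L n) ^ 2 ≤
      16 / (L : ℝ) := by
  have hL' : (L : ℝ) ≠ 0 := by exact_mod_cast hL.ne'
  calc _ ≤ (L : ℝ) * (16 / L ^ 2) :=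
        tsum_le_mul_of_eq_zero_of_le (fun n hn => by simp [secondDiff_eq_zero hn])
          (secondDiff_sq_le hL)
    _ = 16 / L := by field_simp

theorem one_div_sixtyfour_le_tsum_weighted (hL : 4 ≤ L) :
    1 / 64 ≤ ∑' n : ℕ, cubicProfile L (n + 2) ^ 2 / ((n : ℝ) + 2) ^ 4 := by
  have hL' : (4 : ℝ) ≤ L := by exact_mod_cast hL
  have hsummable : Summable fun n : ℕ => cubicProfile L (n + 2) ^ 2 / ((n : ℝ) + 2) ^ 4 :=
    summable_of_ne_finset_zero (s := range L) fun n hn => by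
      simp [apply_eq_zero (by simp at hn; omega : L ≤ n + 2)]
  calc (1 : ℝ) / 64 ≤ cubicProfile L 2 ^ 2 / 2 ^ 4 := by
        rw [apply_of_le (by omega)]
        push_cast
        rw [div_pow, div_div, div_le_div_iff₀ (by norm_num) (by positivity)]
        have h := pow_le_pow_left₀ (by positivity) (by linarith : (L : ℝ) ≤ 2 * (L - 2)) 4
        nlinarith
    _ ≤ _ := by
        simpa using hsummable.le_tsum 0 fun n _ => by positivity

end cubicProfile

theorem rellich_fails_without_u1 :
    ∀ ε > (0 : ℝ), ∃ u : ℕ → ℝ,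
      (∃ N, ∀ n ≥ N, u n = 0) ∧ u 0 = 0 ∧ u 1 ≠ 0 ∧
      ∑' n : ℕ, (2 * u (n + 1) - u (n + 2) - u n) ^ 2 <
        ε * ∑' n : ℕ, (u (n + 2)) ^ 2 / ((n : ℝ) + 2) ^ 4 := by
  intro ε hε
  obtain ⟨L, hL⟩ := exists_nat_gt (max 4 (1024 / ε))
  have hL4 : 4 ≤ L := by exact_mod_cast (le_max_left _ _).trans hL.le
  have hLε : 1024 / ε < L := (le_max_right _ _).trans_lt hL
  have hLpos : (0 : ℝ) < L := by positivity
  refine ⟨cubicProfile L, ⟨L, fun n => cubicProfile.apply_eq_zero⟩, by simp [cubicProfile],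
    cubicProfile.apply_one_ne_zero (by omega), ?_⟩
  calc _ ≤ 16 / (L : ℝ) := cubicProfile.tsum_secondDiff_sq_le (by omega)
    _ < ε * (1 / 64) := by
        rw [div_lt_iff₀ hε] at hLε
        rw [div_lt_iff₀ hLpos]
        linarith
    _ ≤ _ := mul_le_mul_of_nonneg_left (cubicProfile.one_div_sixtyfour_le_tsum_weighted hL4) hε.le
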